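/- arXiv:math/0502221 — 5 statements merged into one kernel-verified Lean document; each statement's English description precedes it below -/
import Mathlib

section
/- Let n ≥ 3 and let M ∈ SL_n(ℤ) be a bit-row matrix. Then there exist an integer l with |l| ≤ n/2 and a sequence m = (m_2, …, m_n) with each m_i ∈ {0, ±1} such that M = B_n^l · R_m · B_n^{−l}. -/
/-- The matrix `B_n`: 1 in each entry (i, i+1), (−1)^(n−1) in the (n,1) entry
(zero-indexed: (n-1,0)), and 0's elsewhere. -/
def Bmat (n : ℕ) : Matrix (Fin n) (Fin n) ℤ :=
  Matrix.of fun i j => if (j : ℕ) = (i : ℕ) + 1 then 1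
    else if (i : ℕ) = n - 1 ∧ (j : ℕ) = 0 then (-1 : ℤ) ^ (n - 1) else 0

/-- A row matrix: all diagonal entries are 1 and it differs from the identity only in
one row. -/
def IsRowMatrix {n : ℕ} (M : Matrix (Fin n) (Fin n) ℤ) : Prop :=
  (∀ i, M i i = 1) ∧ ∃ r : Fin n, ∀ i j, i ≠ r → i ≠ j → M i j = 0

/-- A bit-row matrix: a row matrix all of whose entries lie in {0, 1, −1}. -/
def IsBitRowMatrix {n : ℕ} (M : Matrix (Fin n) (Fin n) ℤ) : Prop :=
  IsRowMatrix M ∧ ∀ i j, M i j = 0 ∨ M i j = 1 ∨ M i j = -1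

/-- The row matrix R_m: agrees with the identity except in the first row, which is
(1, m_2, m_3, …, m_n). -/
def Rmat (n : ℕ) (m : ℕ → ℤ) : Matrix (Fin n) (Fin n) ℤ :=
  Matrix.of fun i j => if i = j then 1 else if (i : ℕ) = 0 then m ((j : ℕ) + 1) else 0

/-! ### Auxiliary definitions -/

/-- Sign function: `(-1)^(n-1)` at index `n-1`, and `1` elsewhere. -/
def epsB (n : ℕ) (i : Fin n) : ℤ := if (i : ℕ) = n - 1 then (-1 : ℤ) ^ (n - 1) else 1

/-- The inverse of `Bmat n`. -/
def Cmat (n : ℕ) [NeZero n] : Matrix (Fin n) (Fin n) ℤ :=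
  Matrix.of fun i j => if i = j + 1 then epsB n j else 0

/-- A bit-row matrix with special row `r`. -/
def QbitRow (n : ℕ) (r : Fin n) (A : Matrix (Fin n) (Fin n) ℤ) : Prop :=
  (∀ i, A i i = 1) ∧ (∀ i j, i ≠ r → i ≠ j → A i j = 0) ∧
    (∀ i j, A i j = 0 ∨ A i j = 1 ∨ A i j = -1)

open Fin.NatCast Fin.CommRing

section Aux

variable {n : ℕ} [NeZero n]

lemma epsB_eq (i : Fin n) : epsB n i = 1 ∨ epsB n i = -1 := by
  unfold epsB
  split_ifs
  · rcases Nat.even_or_odd (n - 1) with h | h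
    · left; exact h.neg_one_pow
    · right; exact h.neg_one_pow
  · left; rfl

lemma epsB_sq (i : Fin n) : epsB n i * epsB n i = 1 := by
  rcases epsB_eq i with h | h <;> rw [h] <;> ring

lemma Bmat_apply (hn : 3 ≤ n) (i j : Fin n) :
    Bmat n i j = if j = i + 1 then epsB n i else 0 := by
  have hi := i.isLt
  have hj := j.isLt
  have h1 : ((1 : Fin n) : ℕ) = 1 := by
    rw [Fin.val_one']
    exact Nat.mod_eq_of_lt (by omega)
  have hadd : ((i + 1 : Fin n) : ℕ) = ((i : ℕ) + 1) % n := by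
    rw [Fin.val_add, h1]
  rw [Bmat, epsB, Matrix.of_apply]
  have hiff : (j = i + 1) ↔ ((j : ℕ) = ((i : ℕ) + 1) % n) := by rw [Fin.ext_iff, hadd]
  simp only [hiff]
  by_cases hc : (i : ℕ) = n - 1
  · have hm : ((i : ℕ) + 1) % n = 0 := by
      rw [hc, Nat.sub_add_cancel (by omega), Nat.mod_self]
    rw [hm, hc]
    split_ifs <;> first | rfl | omega
  · have hm : ((i : ℕ) + 1) % n = (i : ℕ) + 1 := Nat.mod_eq_of_lt (by omega)
    rw [hm]
    split_ifs <;> first | rfl | omega | (exfalso; tauto)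

lemma Bmat_mul_apply (hn : 3 ≤ n) (N : Matrix (Fin n) (Fin n) ℤ) (i j : Fin n) :
    (Bmat n * N) i j = epsB n i * N (i + 1) j := by
  rw [Matrix.mul_apply]
  simp only [Bmat_apply hn, ite_mul, zero_mul]
  rw [Finset.sum_ite_eq' Finset.univ (i + 1) (fun k => epsB n i * N k j)]
  simp

lemma mul_Cmat_apply (N : Matrix (Fin n) (Fin n) ℤ) (i j : Fin n) :
    (N * Cmat n) i j = epsB n j * N i (j + 1) := by
  rw [Matrix.mul_apply]
  simp only [Cmat, Matrix.of_apply, mul_ite, mul_zero]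
  rw [Finset.sum_ite_eq' Finset.univ (j + 1) (fun k => N i k * epsB n j)]
  simp [mul_comm]

lemma Cmat_mul_apply (N : Matrix (Fin n) (Fin n) ℤ) (i j : Fin n) :
    (Cmat n * N) i j = epsB n (i - 1) * N (i - 1) j := by
  rw [Matrix.mul_apply]
  simp only [Cmat, Matrix.of_apply, ite_mul, zero_mul]
  have h : ∀ k : Fin n, (i = k + 1) ↔ (k = i - 1) := fun k => by
    rw [eq_comm, eq_sub_iff_add_eq]
  simp_rw [h]
  rw [Finset.sum_ite_eq' Finset.univ (i - 1) (fun k => epsB n k * N k j)]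
  simp

lemma mul_Bmat_apply (hn : 3 ≤ n) (N : Matrix (Fin n) (Fin n) ℤ) (i j : Fin n) :
    (N * Bmat n) i j = epsB n (j - 1) * N i (j - 1) := by
  rw [Matrix.mul_apply]
  simp only [Bmat_apply hn, mul_ite, mul_zero]
  have h : ∀ k : Fin n, (j = k + 1) ↔ (k = j - 1) := fun k => by
    rw [eq_comm, eq_sub_iff_add_eq]
  simp_rw [h]
  rw [Finset.sum_ite_eq' Finset.univ (j - 1) (fun k => N i k * epsB n k)]
  simp [mul_comm]

lemma conjB_apply (hn : 3 ≤ n) (A : Matrix (Fin n) (Fin n) ℤ) (i j : Fin n) :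
    (Bmat n * A * Cmat n) i j = epsB n i * epsB n j * A (i + 1) (j + 1) := by
  rw [mul_Cmat_apply, Bmat_mul_apply hn]
  ring

lemma conjC_apply (hn : 3 ≤ n) (A : Matrix (Fin n) (Fin n) ℤ) (i j : Fin n) :
    (Cmat n * A * Bmat n) i j = epsB n (i - 1) * epsB n (j - 1) * A (i - 1) (j - 1) := by
  rw [mul_Bmat_apply hn, Cmat_mul_apply]
  ring

lemma Bmat_mul_Cmat (hn : 3 ≤ n) : Bmat n * Cmat n = 1 := by
  ext i j
  rw [mul_Cmat_apply, Bmat_apply hn]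
  by_cases h : i = j
  · subst h
    rw [if_pos rfl, Matrix.one_apply_eq, epsB_sq]
  · rw [if_neg (fun hc => h (add_right_cancel hc).symm), mul_zero,
      Matrix.one_apply_ne (fun hc => h hc)]

lemma step_up (hn : 3 ≤ n) {r : Fin n} {A : Matrix (Fin n) (Fin n) ℤ}
    (h : QbitRow n r A) : QbitRow n (r - 1) (Bmat n * A * Cmat n) := by
  obtain ⟨h1, h2, h3⟩ := h
  refine ⟨fun i => ?_, fun i j hir hij => ?_, fun i j => ?_⟩
  · rw [conjB_apply hn, h1, mul_one, epsB_sq]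
  · rw [conjB_apply hn, h2 (i + 1) (j + 1) ?_ ?_, mul_zero]
    · intro hc
      exact hir (by rw [eq_sub_iff_add_eq]; exact hc)
    · exact fun hc => hij (add_right_cancel hc)
  · rw [conjB_apply hn]
    rcases epsB_eq (n := n) i with e1 | e1 <;> rcases epsB_eq (n := n) j with e2 | e2 <;>
      rcases h3 (i + 1) (j + 1) with a | a | a <;> rw [e1, e2, a] <;> norm_num

lemma step_down (hn : 3 ≤ n) {r : Fin n} {A : Matrix (Fin n) (Fin n) ℤ}
    (h : QbitRow n r A) : QbitRow n (r + 1) (Cmat n * A * Bmat n) := by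
  obtain ⟨h1, h2, h3⟩ := h
  refine ⟨fun i => ?_, fun i j hir hij => ?_, fun i j => ?_⟩
  · rw [conjC_apply hn, h1, mul_one, epsB_sq]
  · rw [conjC_apply hn, h2 (i - 1) (j - 1) ?_ ?_, mul_zero]
    · intro hc
      exact hir (by rw [← hc]; ring)
    · exact fun hc => hij (by have := sub_left_injective hc; exact this)
  · rw [conjC_apply hn]
    rcases epsB_eq (n := n) (i - 1) with e1 | e1 <;>
      rcases epsB_eq (n := n) (j - 1) with e2 | e2 <;>
      rcases h3 (i - 1) (j - 1) with a | a | a <;> rw [e1, e2, a] <;> norm_num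

lemma finish_lemma (hn : 3 ≤ n) (B M R0 : Matrix.SpecialLinearGroup (Fin n) ℤ) (l : ℤ)
    (hMeq : M = B ^ l * R0 * B ^ (-l))
    (hQ0 : QbitRow n 0 (R0 : Matrix (Fin n) (Fin n) ℤ)) :
    ∃ m : ℕ → ℤ,
      (∀ i, 2 ≤ i → i ≤ n → m i ∈ ({0, 1, -1} : Set ℤ)) ∧
      ∀ R : Matrix.SpecialLinearGroup (Fin n) ℤ,
        (R : Matrix (Fin n) (Fin n) ℤ) = Rmat n m →
        M = B ^ l * R * B ^ (-l) := by
  obtain ⟨q1, q2, q3⟩ := hQ0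
  refine ⟨fun k => if h : 1 ≤ k ∧ k ≤ n then
      (R0 : Matrix (Fin n) (Fin n) ℤ) 0 ⟨k - 1, by omega⟩ else 0, ?_, ?_⟩
  · intro i h2 hle
    simp only [dif_pos (⟨by omega, hle⟩ : 1 ≤ i ∧ i ≤ n)]
    simp only [Set.mem_insert_iff, Set.mem_singleton_iff]
    exact q3 _ _
  · intro R hR
    have hR0 : (R0 : Matrix (Fin n) (Fin n) ℤ) = Rmat n
        (fun k => if h : 1 ≤ k ∧ k ≤ n then
          (R0 : Matrix (Fin n) (Fin n) ℤ) 0 ⟨k - 1, by omega⟩ else 0) := by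
      ext i j
      rw [Rmat, Matrix.of_apply]
      by_cases hij : i = j
      · subst hij
        rw [if_pos rfl]
        exact q1 i
      · rw [if_neg hij]
        by_cases hi0 : (i : ℕ) = 0
        · rw [if_pos hi0]
          have hi : i = 0 := by
            apply Fin.ext
            simpa using hi0
          subst hi
          have hj := j.isLt
          simp only [dif_pos (⟨by omega, by omega⟩ : 1 ≤ (j : ℕ) + 1 ∧ (j : ℕ) + 1 ≤ n)]
          congr 1
        · rw [if_neg hi0]
          exact q2 i j (fun h => hi0 (by simp [h])) hij
    have hRR0 : R = R0 := Subtype.coe_injective (hR.trans hR0.symm)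
    rw [hRR0]
    exact hMeq

end Aux

/-- Every bit-row matrix M equals B^l · R_m · B^{−l} for some |l| ≤ n/2 and some
sequence m with entries in {0, ±1}. -/
theorem bitRowMatrix_eq_conj_Rm (n : ℕ) (hn : 3 ≤ n)
    (B M : Matrix.SpecialLinearGroup (Fin n) ℤ)
    (hB : (B : Matrix (Fin n) (Fin n) ℤ) = Bmat n)
    (hM : IsBitRowMatrix (M : Matrix (Fin n) (Fin n) ℤ)) :
    ∃ (l : ℤ) (m : ℕ → ℤ),
      2 * |l| ≤ (n : ℤ) ∧
      (∀ i, 2 ≤ i → i ≤ n → m i ∈ ({0, 1, -1} : Set ℤ)) ∧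
      ∀ R : Matrix.SpecialLinearGroup (Fin n) ℤ,
        (R : Matrix (Fin n) (Fin n) ℤ) = Rmat n m →
        M = B ^ l * R * B ^ (-l) := by
  have hnz : NeZero n := ⟨by omega⟩
  obtain ⟨⟨hdiag, r, hrow⟩, hbits⟩ := hM
  have hQ : QbitRow n r (M : Matrix (Fin n) (Fin n) ℤ) := ⟨hdiag, hrow, hbits⟩
  have hBC : Bmat n * Cmat n = 1 := Bmat_mul_Cmat hn
  have hC : ((B⁻¹ : Matrix.SpecialLinearGroup (Fin n) ℤ) : Matrix (Fin n) (Fin n) ℤ)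
      = Cmat n := by
    calc ((B⁻¹ : Matrix.SpecialLinearGroup (Fin n) ℤ) : Matrix (Fin n) (Fin n) ℤ)
        = ↑(B⁻¹) * (Bmat n * Cmat n) := by rw [hBC, mul_one]
      _ = (↑(B⁻¹) * ↑B) * Cmat n := by rw [hB, mul_assoc]
      _ = Cmat n := by
          rw [← Matrix.SpecialLinearGroup.coe_mul, inv_mul_cancel]
          simp
  have iter_up : ∀ k : ℕ,
      QbitRow n (r - (k : Fin n)) ((B ^ k * M * (B ^ k)⁻¹ : Matrix.SpecialLinearGroup (Fin n) ℤ)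
        : Matrix (Fin n) (Fin n) ℤ) := by
    intro k
    induction k with
    | zero => simpa using hQ
    | succ k ih =>
      have he : B ^ (k + 1) * M * (B ^ (k + 1))⁻¹
          = B * (B ^ k * M * (B ^ k)⁻¹) * B⁻¹ := by
        rw [pow_succ' B k, mul_inv_rev]
        group
      have hcoe : ((B ^ (k + 1) * M * (B ^ (k + 1))⁻¹ : Matrix.SpecialLinearGroup (Fin n) ℤ)
          : Matrix (Fin n) (Fin n) ℤ)
          = Bmat n * ((B ^ k * M * (B ^ k)⁻¹ : Matrix.SpecialLinearGroup (Fin n) ℤ)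
            : Matrix (Fin n) (Fin n) ℤ) * Cmat n := by
        rw [he]
        simp only [Matrix.SpecialLinearGroup.coe_mul, hB, hC]
      rw [hcoe, show ((k + 1 : ℕ) : Fin n) = (k : Fin n) + 1 from by push_cast; ring,
        show r - ((k : Fin n) + 1) = (r - (k : Fin n)) - 1 from by ring]
      exact step_up hn ih
  have iter_down : ∀ k : ℕ,
      QbitRow n (r + (k : Fin n)) (((B ^ k)⁻¹ * M * B ^ k : Matrix.SpecialLinearGroup (Fin n) ℤ)
        : Matrix (Fin n) (Fin n) ℤ) := by
    intro k
    induction k with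
    | zero => simpa using hQ
    | succ k ih =>
      have he : (B ^ (k + 1))⁻¹ * M * B ^ (k + 1)
          = B⁻¹ * ((B ^ k)⁻¹ * M * B ^ k) * B := by
        rw [pow_succ B k, mul_inv_rev]
        group
      have hcoe : (((B ^ (k + 1))⁻¹ * M * B ^ (k + 1) : Matrix.SpecialLinearGroup (Fin n) ℤ)
          : Matrix (Fin n) (Fin n) ℤ)
          = Cmat n * (((B ^ k)⁻¹ * M * B ^ k : Matrix.SpecialLinearGroup (Fin n) ℤ)
            : Matrix (Fin n) (Fin n) ℤ) * Bmat n := by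
        rw [he]
        simp only [Matrix.SpecialLinearGroup.coe_mul, hB, hC]
      rw [hcoe, show ((k + 1 : ℕ) : Fin n) = (k : Fin n) + 1 from by push_cast; ring,
        show r + ((k : Fin n) + 1) = (r + (k : Fin n)) + 1 from by ring]
      exact step_down hn ih
  by_cases hr : 2 * (r : ℕ) ≤ n
  · -- conjugate up r times; l = -(r : ℕ)
    set k : ℕ := (r : ℕ) with hk
    have h0 : QbitRow n 0 ((B ^ k * M * (B ^ k)⁻¹ : Matrix.SpecialLinearGroup (Fin n) ℤ)
        : Matrix (Fin n) (Fin n) ℤ) := by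
      have := iter_up k
      rwa [show r - (k : Fin n) = 0 from by rw [hk, Fin.cast_val_eq_self, sub_self]] at this
    have hMeq : M = B ^ (-(k : ℤ)) * (B ^ k * M * (B ^ k)⁻¹) * B ^ (-(-(k : ℤ))) := by
      rw [neg_neg, zpow_neg, zpow_natCast]
      group
    obtain ⟨m, hm1, hm2⟩ := finish_lemma hn B M (B ^ k * M * (B ^ k)⁻¹) (-(k : ℤ)) hMeq h0
    refine ⟨-(k : ℤ), m, ?_, hm1, hm2⟩
    rw [abs_neg, abs_of_nonneg (by positivity : (0 : ℤ) ≤ (k : ℤ))]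
    exact_mod_cast hr
  · -- conjugate down n - r times; l = (n - r : ℕ)
    set k : ℕ := n - (r : ℕ) with hk
    have hrlt := r.isLt
    have hcast : ((k : ℕ) : Fin n) = -r := by
      rw [hk, Nat.cast_sub (le_of_lt hrlt)]
      simp [Fin.cast_val_eq_self]
    have h0 : QbitRow n 0 (((B ^ k)⁻¹ * M * B ^ k : Matrix.SpecialLinearGroup (Fin n) ℤ)
        : Matrix (Fin n) (Fin n) ℤ) := by
      have := iter_down k
      rwa [hcast, add_neg_cancel] at this
    have hMeq : M = B ^ ((k : ℤ)) * ((B ^ k)⁻¹ * M * B ^ k) * B ^ (-(k : ℤ)) := by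
      rw [zpow_neg, zpow_natCast]
      group
    obtain ⟨m, hm1, hm2⟩ := finish_lemma hn B M ((B ^ k)⁻¹ * M * B ^ k) ((k : ℤ)) hMeq h0
    refine ⟨(k : ℤ), m, ?_, hm1, hm2⟩
    rw [abs_of_nonneg (by positivity : (0 : ℤ) ≤ (k : ℤ))]
    have : 2 * k ≤ n := by omega
    exact_mod_cast this
end

section
/- For every non-negative integer l, the product e_{1,2}² · (e_{2,1}·e_{1,2})^l · e_{1,3} · (e_{2,1}·e_{1,2})^{−l} · e_{1,2}⁻¹ · (e_{2,1}·e_{1,2})^l · e_{1,3}⁻¹ · (e_{2,1}·e_{1,2})^{−l} · e_{1,2}⁻¹ equals e_{1,3}^{F_{2l}} in SL_3(ℤ). -/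
/-- The 3×3 elementary matrix e_{i,j}: 1's on the diagonal, 1 in the (i,j) entry,
and 0's elsewhere. -/
def Eij (i j : Fin 3) : Matrix (Fin 3) (Fin 3) ℤ :=
  1 + Matrix.single i j 1

open Matrix

lemma fibZ (n : ℕ) : (Nat.fib (n + 2) : ℤ) = Nat.fib (n + 1) + Nat.fib n := by
  rw [Nat.fib_add_two]; push_cast; ring

lemma cassini (l : ℕ) :
    (Nat.fib (2 * l + 1) : ℤ) ^ 2 - Nat.fib (2 * l + 1) * Nat.fib (2 * l)
      - (Nat.fib (2 * l) : ℤ) ^ 2 = 1 := by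
  induction l with
  | zero => simp
  | succ n ih =>
    have e1 : 2 * (n + 1) + 1 = 2 * n + 1 + 2 := by ring
    have e2 : 2 * (n + 1) = 2 * n + 2 := by ring
    rw [e1, e2, fibZ (2 * n + 1), fibZ (2 * n)]
    linear_combination ih

lemma e12m : Eij 0 1 = !![1, 1, 0; 0, 1, 0; 0, 0, 1] := by
  ext i j
  fin_cases i <;> fin_cases j <;>
    simp [Eij, Matrix.single, Matrix.one_apply, Matrix.vecHead, Matrix.vecTail]

lemma e21m : Eij 1 0 = !![1, 0, 0; 1, 1, 0; 0, 0, 1] := by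
  ext i j
  fin_cases i <;> fin_cases j <;>
    simp [Eij, Matrix.single, Matrix.one_apply, Matrix.vecHead, Matrix.vecTail]

lemma e13m : Eij 0 2 = !![1, 0, 1; 0, 1, 0; 0, 0, 1] := by
  ext i j
  fin_cases i <;> fin_cases j <;>
    simp [Eij, Matrix.single, Matrix.one_apply, Matrix.vecHead, Matrix.vecTail]

lemma A_pow (l : ℕ) :
    (!![1, 0, 0; 1, 1, 0; 0, 0, 1] * !![1, 1, 0; 0, 1, 0; 0, 0, 1] : Matrix (Fin 3) (Fin 3) ℤ) ^ l
      = !![(Nat.fib (2 * l + 1) : ℤ) - Nat.fib (2 * l), Nat.fib (2 * l), 0;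
           (Nat.fib (2 * l) : ℤ), Nat.fib (2 * l + 1), 0; 0, 0, 1] := by
  induction l with
  | zero =>
    ext i j
    fin_cases i <;> fin_cases j <;> simp [Matrix.one_apply, Matrix.vecHead, Matrix.vecTail]
  | succ n ih =>
    rw [pow_succ, ih]
    have e1 : 2 * (n + 1) + 1 = 2 * n + 1 + 2 := by ring
    have e2 : 2 * (n + 1) = 2 * n + 2 := by ring
    have e3 : (2 : ℕ) * n + 1 + 1 = 2 * n + 2 := by ring
    rw [e1, e2, fibZ (2 * n + 1), e3, fibZ (2 * n)]
    ext i j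
    fin_cases i <;> fin_cases j <;>
      simp [Matrix.mul_apply, Fin.sum_univ_three, Matrix.vecHead, Matrix.vecTail] <;> ring

lemma E13_pow (k : ℕ) :
    (!![1, 0, 1; 0, 1, 0; 0, 0, 1] : Matrix (Fin 3) (Fin 3) ℤ) ^ k
      = !![1, 0, (k : ℤ); 0, 1, 0; 0, 0, 1] := by
  induction k with
  | zero =>
    ext i j
    fin_cases i <;> fin_cases j <;> simp [Matrix.one_apply, Matrix.vecHead, Matrix.vecTail]
  | succ n ih =>
    rw [pow_succ, ih]
    ext i j
    fin_cases i <;> fin_cases j <;>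
      simp [Matrix.mul_apply, Fin.sum_univ_three, Matrix.vecHead, Matrix.vecTail] <;> push_cast <;> ring

lemma key (x y : ℤ) (h : x ^ 2 - x * y - y ^ 2 = 1) :
    ((!![1, 1, 0; 0, 1, 0; 0, 0, 1] *
      !![1, 1, 0; 0, 1, 0; 0, 0, 1] *
      !![x - y, y, 0; y, x, 0; 0, 0, 1] *
      !![1, 0, 1; 0, 1, 0; 0, 0, 1] *
      !![x, -y, 0; -y, x - y, 0; 0, 0, 1] *
      !![1, -1, 0; 0, 1, 0; 0, 0, 1] *
      !![x - y, y, 0; y, x, 0; 0, 0, 1] *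
      !![1, 0, -1; 0, 1, 0; 0, 0, 1] *
      !![x, -y, 0; -y, x - y, 0; 0, 0, 1] *
      !![1, -1, 0; 0, 1, 0; 0, 0, 1]
      : Matrix (Fin 3) (Fin 3) ℤ)) = !![1, 0, y; 0, 1, 0; 0, 0, 1] := by
  have a0 : (!![1, 1, 0; 0, 1, 0; 0, 0, 1] * !![1, 1, 0; 0, 1, 0; 0, 0, 1]
      : Matrix (Fin 3) (Fin 3) ℤ) = !![1, 2, 0; 0, 1, 0; 0, 0, 1] := by
    ext i j
    fin_cases i <;> fin_cases j <;>
      simp [Matrix.mul_apply, Fin.sum_univ_three, Matrix.vecHead, Matrix.vecTail]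
    all_goals first
      | ring1
      | linear_combination h
      | linear_combination 2 * h
  have a1 : (!![1, 2, 0; 0, 1, 0; 0, 0, 1] * !![x - y, y, 0; y, x, 0; 0, 0, 1]
      : Matrix (Fin 3) (Fin 3) ℤ) = !![x + y, 2 * x + y, 0; y, x, 0; 0, 0, 1] := by
    ext i j
    fin_cases i <;> fin_cases j <;>
      simp [Matrix.mul_apply, Fin.sum_univ_three, Matrix.vecHead, Matrix.vecTail]
    all_goals first
      | ring1
      | linear_combination h
      | linear_combination 2 * h
  have a2 : (!![x + y, 2 * x + y, 0; y, x, 0; 0, 0, 1] * !![1, 0, 1; 0, 1, 0; 0, 0, 1]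
      : Matrix (Fin 3) (Fin 3) ℤ) = !![x + y, 2 * x + y, x + y; y, x, y; 0, 0, 1] := by
    ext i j
    fin_cases i <;> fin_cases j <;>
      simp [Matrix.mul_apply, Fin.sum_univ_three, Matrix.vecHead, Matrix.vecTail]
    all_goals first
      | ring1
      | linear_combination h
      | linear_combination 2 * h
  have a3 : (!![x + y, 2 * x + y, x + y; y, x, y; 0, 0, 1] * !![x, -y, 0; -y, x - y, 0; 0, 0, 1]
      : Matrix (Fin 3) (Fin 3) ℤ) = !![1, 2, x + y; 0, 1, y; 0, 0, 1] := by
    ext i j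
    fin_cases i <;> fin_cases j <;>
      simp [Matrix.mul_apply, Fin.sum_univ_three, Matrix.vecHead, Matrix.vecTail]
    all_goals first
      | ring1
      | linear_combination h
      | linear_combination 2 * h
  have a4 : (!![1, 2, x + y; 0, 1, y; 0, 0, 1] * !![1, -1, 0; 0, 1, 0; 0, 0, 1]
      : Matrix (Fin 3) (Fin 3) ℤ) = !![1, 1, x + y; 0, 1, y; 0, 0, 1] := by
    ext i j
    fin_cases i <;> fin_cases j <;>
      simp [Matrix.mul_apply, Fin.sum_univ_three, Matrix.vecHead, Matrix.vecTail]
    all_goals first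
      | ring1
      | linear_combination h
      | linear_combination 2 * h
  have a5 : (!![1, 1, x + y; 0, 1, y; 0, 0, 1] * !![x - y, y, 0; y, x, 0; 0, 0, 1]
      : Matrix (Fin 3) (Fin 3) ℤ) = !![x, x + y, x + y; y, x, y; 0, 0, 1] := by
    ext i j
    fin_cases i <;> fin_cases j <;>
      simp [Matrix.mul_apply, Fin.sum_univ_three, Matrix.vecHead, Matrix.vecTail]
    all_goals first
      | ring1
      | linear_combination h
      | linear_combination 2 * h
  have a6 : (!![x, x + y, x + y; y, x, y; 0, 0, 1] * !![1, 0, -1; 0, 1, 0; 0, 0, 1]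
      : Matrix (Fin 3) (Fin 3) ℤ) = !![x, x + y, y; y, x, 0; 0, 0, 1] := by
    ext i j
    fin_cases i <;> fin_cases j <;>
      simp [Matrix.mul_apply, Fin.sum_univ_three, Matrix.vecHead, Matrix.vecTail]
    all_goals first
      | ring1
      | linear_combination h
      | linear_combination 2 * h
  have a7 : (!![x, x + y, y; y, x, 0; 0, 0, 1] * !![x, -y, 0; -y, x - y, 0; 0, 0, 1]
      : Matrix (Fin 3) (Fin 3) ℤ) = !![1, 1, y; 0, 1, 0; 0, 0, 1] := by
    ext i j
    fin_cases i <;> fin_cases j <;>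
      simp [Matrix.mul_apply, Fin.sum_univ_three, Matrix.vecHead, Matrix.vecTail]
    all_goals first
      | ring1
      | linear_combination h
      | linear_combination 2 * h
  have a8 : (!![1, 1, y; 0, 1, 0; 0, 0, 1] * !![1, -1, 0; 0, 1, 0; 0, 0, 1]
      : Matrix (Fin 3) (Fin 3) ℤ) = !![1, 0, y; 0, 1, 0; 0, 0, 1] := by
    ext i j
    fin_cases i <;> fin_cases j <;>
      simp [Matrix.mul_apply, Fin.sum_univ_three, Matrix.vecHead, Matrix.vecTail]
    all_goals first
      | ring1
      | linear_combination h
      | linear_combination 2 * h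
  rw [a0, a1, a2, a3, a4, a5, a6, a7, a8]

lemma SL_inv_coe (g : Matrix.SpecialLinearGroup (Fin 3) ℤ)
    (m : Matrix (Fin 3) (Fin 3) ℤ) (h : (g : Matrix (Fin 3) (Fin 3) ℤ) * m = 1) :
    ((g⁻¹ : Matrix.SpecialLinearGroup (Fin 3) ℤ) : Matrix (Fin 3) (Fin 3) ℤ) = m := by
  have h1 : ((g⁻¹ : Matrix.SpecialLinearGroup (Fin 3) ℤ) : Matrix (Fin 3) (Fin 3) ℤ)
      * (g : Matrix (Fin 3) (Fin 3) ℤ) = 1 := by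
    rw [← Matrix.SpecialLinearGroup.coe_mul, inv_mul_cancel]
    rfl
  calc ((g⁻¹ : Matrix.SpecialLinearGroup (Fin 3) ℤ) : Matrix (Fin 3) (Fin 3) ℤ)
      = ↑(g⁻¹) * ((g : Matrix (Fin 3) (Fin 3) ℤ) * m) := by rw [h, mul_one]
    _ = (↑(g⁻¹) * (g : Matrix (Fin 3) (Fin 3) ℤ)) * m := by rw [mul_assoc]
    _ = m := by rw [h1, one_mul]

/-- For every l ≥ 0,
e_{1,2}² (e_{2,1}e_{1,2})^l e_{1,3} (e_{2,1}e_{1,2})^{−l} e_{1,2}⁻¹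
(e_{2,1}e_{1,2})^l e_{1,3}⁻¹ (e_{2,1}e_{1,2})^{−l} e_{1,2}⁻¹ = e_{1,3}^{F_{2l}}
in SL_3(ℤ). -/
theorem fib_even_power_word (l : ℕ)
    (E12 E21 E13 : Matrix.SpecialLinearGroup (Fin 3) ℤ)
    (h12 : (E12 : Matrix (Fin 3) (Fin 3) ℤ) = Eij 0 1)
    (h21 : (E21 : Matrix (Fin 3) (Fin 3) ℤ) = Eij 1 0)
    (h13 : (E13 : Matrix (Fin 3) (Fin 3) ℤ) = Eij 0 2) :
    E12 ^ 2 * (E21 * E12) ^ l * E13 * (E21 * E12) ^ (-(l : ℤ)) * E12⁻¹ *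
      (E21 * E12) ^ l * E13⁻¹ * (E21 * E12) ^ (-(l : ℤ)) * E12⁻¹
      = E13 ^ (Nat.fib (2 * l)) := by
  set x : ℤ := (Nat.fib (2 * l + 1) : ℤ) with hx
  set y : ℤ := (Nat.fib (2 * l) : ℤ) with hy
  have cas : x ^ 2 - x * y - y ^ 2 = 1 := cassini l
  have hzpow : (E21 * E12) ^ (-(l : ℤ)) = ((E21 * E12) ^ l)⁻¹ := by
    rw [_root_.zpow_neg, zpow_natCast]
  have hA : (((E21 * E12) ^ l : Matrix.SpecialLinearGroup (Fin 3) ℤ)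
      : Matrix (Fin 3) (Fin 3) ℤ) = !![x - y, y, 0; y, x, 0; 0, 0, 1] := by
    rw [Matrix.SpecialLinearGroup.coe_pow, Matrix.SpecialLinearGroup.coe_mul,
      h21, h12, e21m, e12m, A_pow]
  have hAinv : ((((E21 * E12) ^ l)⁻¹ : Matrix.SpecialLinearGroup (Fin 3) ℤ)
      : Matrix (Fin 3) (Fin 3) ℤ) = !![x, -y, 0; -y, x - y, 0; 0, 0, 1] := by
    apply SL_inv_coe
    rw [hA]
    ext i j
    fin_cases i <;> fin_cases j <;>
      simp [Matrix.mul_apply, Fin.sum_univ_three, Matrix.one_apply, Matrix.vecHead, Matrix.vecTail]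
    all_goals first
      | ring1
      | linear_combination cas
  have hE12inv : ((E12⁻¹ : Matrix.SpecialLinearGroup (Fin 3) ℤ)
      : Matrix (Fin 3) (Fin 3) ℤ) = !![1, -1, 0; 0, 1, 0; 0, 0, 1] := by
    apply SL_inv_coe
    rw [h12, e12m]
    ext i j
    fin_cases i <;> fin_cases j <;>
      simp [Matrix.mul_apply, Fin.sum_univ_three, Matrix.one_apply, Matrix.vecHead, Matrix.vecTail]
  have hE13inv : ((E13⁻¹ : Matrix.SpecialLinearGroup (Fin 3) ℤ)
      : Matrix (Fin 3) (Fin 3) ℤ) = !![1, 0, -1; 0, 1, 0; 0, 0, 1] := by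
    apply SL_inv_coe
    rw [h13, e13m]
    ext i j
    fin_cases i <;> fin_cases j <;>
      simp [Matrix.mul_apply, Fin.sum_univ_three, Matrix.one_apply, Matrix.vecHead, Matrix.vecTail]
  apply Subtype.coe_injective
  rw [hzpow]
  simp only [Matrix.SpecialLinearGroup.coe_mul]
  rw [hA, hAinv, hE12inv, hE13inv]
  simp only [Matrix.SpecialLinearGroup.coe_pow]
  rw [h12, h13, e12m, e13m, E13_pow, ← hy, pow_two]
  exact key x y cas
end

section
/- For every non-negative integer l, the product e_{1,2}² · (e_{2,1}·e_{1,2})^l · e_{2,3} · (e_{2,1}·e_{1,2})^{−l} · e_{1,2}⁻¹ · (e_{2,1}·e_{1,2})^l · e_{2,3}⁻¹ · (e_{2,1}·e_{1,2})^{−l} · e_{1,2}⁻¹ equals e_{1,3}^{F_{2l+1}} in SL_3(ℤ). -/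
/-- For every l ≥ 0,
e_{1,2}² (e_{2,1}e_{1,2})^l e_{2,3} (e_{2,1}e_{1,2})^{−l} e_{1,2}⁻¹
(e_{2,1}e_{1,2})^l e_{2,3}⁻¹ (e_{2,1}e_{1,2})^{−l} e_{1,2}⁻¹ = e_{1,3}^{F_{2l+1}}
in SL_3(ℤ). -/
theorem fib_odd_power_word (l : ℕ)
    (E12 E21 E13 E23 : Matrix.SpecialLinearGroup (Fin 3) ℤ)
    (h12 : (E12 : Matrix (Fin 3) (Fin 3) ℤ) = Eij 0 1)
    (h21 : (E21 : Matrix (Fin 3) (Fin 3) ℤ) = Eij 1 0)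
    (h13 : (E13 : Matrix (Fin 3) (Fin 3) ℤ) = Eij 0 2)
    (h23 : (E23 : Matrix (Fin 3) (Fin 3) ℤ) = Eij 1 2) :
    E12 ^ 2 * (E21 * E12) ^ l * E23 * (E21 * E12) ^ (-(l : ℤ)) * E12⁻¹ *
      (E21 * E12) ^ l * E23⁻¹ * (E21 * E12) ^ (-(l : ℤ)) * E12⁻¹
      = E13 ^ (Nat.fib (2 * l + 1)) := by
  have c1 : Commute E13 E23 := by
    apply Subtype.ext
    simp only [Matrix.SpecialLinearGroup.coe_mul, h12, h21, h13, h23]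
    ext i j
    fin_cases i <;> fin_cases j <;>
      simp [Eij, Matrix.single, Matrix.mul_apply, Fin.sum_univ_succ, Matrix.one_apply]
  have s2 : SemiconjBy E12 E13 E13 := by
    apply Subtype.ext
    simp only [Matrix.SpecialLinearGroup.coe_mul, h12, h21, h13, h23]
    ext i j
    fin_cases i <;> fin_cases j <;>
      simp [Eij, Matrix.single, Matrix.mul_apply, Fin.sum_univ_succ, Matrix.one_apply]
  have s3 : SemiconjBy E12 E23 (E13 * E23) := by
    apply Subtype.ext
    simp only [Matrix.SpecialLinearGroup.coe_mul, h12, h21, h13, h23]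
    ext i j
    fin_cases i <;> fin_cases j <;>
      simp [Eij, Matrix.single, Matrix.mul_apply, Fin.sum_univ_succ, Matrix.one_apply]
  have s4 : SemiconjBy E21 E13 (E13 * E23) := by
    apply Subtype.ext
    simp only [Matrix.SpecialLinearGroup.coe_mul, h12, h21, h13, h23]
    ext i j
    fin_cases i <;> fin_cases j <;>
      simp [Eij, Matrix.single, Matrix.mul_apply, Fin.sum_univ_succ, Matrix.one_apply]
  have s5 : SemiconjBy E21 E23 E23 := by
    apply Subtype.ext
    simp only [Matrix.SpecialLinearGroup.coe_mul, h12, h21, h13, h23]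
    ext i j
    fin_cases i <;> fin_cases j <;>
      simp [Eij, Matrix.single, Matrix.mul_apply, Fin.sum_univ_succ, Matrix.one_apply]
  -- key semiconjugation lemma
  have K : ∀ m : ℕ, SemiconjBy ((E21 * E12) ^ m) E23
      (E13 ^ Nat.fib (2 * m) * E23 ^ Nat.fib (2 * m + 1)) := by
    intro m
    induction m with
    | zero => simp [SemiconjBy]
    | succ m ih =>
        have hmid : ∀ a b : ℕ, E13 ^ a * (E13 * E23) ^ b = E13 ^ (a + b) * E23 ^ b := by
          intro a b
          rw [c1.mul_pow, ← mul_assoc, ← pow_add]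
        have step1 : SemiconjBy E12
            (E13 ^ Nat.fib (2 * m) * E23 ^ Nat.fib (2 * m + 1))
            (E13 ^ (Nat.fib (2 * m) + Nat.fib (2 * m + 1)) * E23 ^ Nat.fib (2 * m + 1)) := by
          have := (s2.pow_right (Nat.fib (2 * m))).mul_right
            (s3.pow_right (Nat.fib (2 * m + 1)))
          rwa [hmid] at this
        have step2 : SemiconjBy E21
            (E13 ^ (Nat.fib (2 * m) + Nat.fib (2 * m + 1)) * E23 ^ Nat.fib (2 * m + 1))
            (E13 ^ (Nat.fib (2 * m) + Nat.fib (2 * m + 1)) *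
              E23 ^ (Nat.fib (2 * m) + Nat.fib (2 * m + 1) + Nat.fib (2 * m + 1))) := by
          have := (s4.pow_right (Nat.fib (2 * m) + Nat.fib (2 * m + 1))).mul_right
            (s5.pow_right (Nat.fib (2 * m + 1)))
          rwa [c1.mul_pow, mul_assoc, ← pow_add] at this
        have hstep : SemiconjBy (E21 * E12)
            (E13 ^ Nat.fib (2 * m) * E23 ^ Nat.fib (2 * m + 1))
            (E13 ^ (Nat.fib (2 * m) + Nat.fib (2 * m + 1)) *
              E23 ^ (Nat.fib (2 * m) + Nat.fib (2 * m + 1) + Nat.fib (2 * m + 1))) :=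
          step2.mul_left step1
        have := hstep.mul_left ih
        rw [← pow_succ'] at this
        have e1 : Nat.fib (2 * (m + 1)) = Nat.fib (2 * m) + Nat.fib (2 * m + 1) := by
          have : 2 * (m + 1) = 2 * m + 2 := by ring
          rw [this, Nat.fib_add_two]
        have e2 : Nat.fib (2 * (m + 1) + 1)
            = Nat.fib (2 * m) + Nat.fib (2 * m + 1) + Nat.fib (2 * m + 1) := by
          have h' : 2 * (m + 1) + 1 = (2 * m + 1) + 2 := by ring
          rw [h', Nat.fib_add_two, show 2 * m + 1 + 1 = 2 * m + 2 by ring,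
            Nat.fib_add_two]
          omega
        rw [e1, e2]
        exact this
  -- now assemble
  set a := Nat.fib (2 * l) with ha
  set b := Nat.fib (2 * l + 1) with hb
  set X := (E21 * E12) ^ l with hX
  have hz : (E21 * E12) ^ (-(l : ℤ)) = X⁻¹ := by rw [zpow_neg, zpow_natCast]
  have KB : X * E23 = (E13 ^ a * E23 ^ b) * X := K l
  have conj : X * E23 * X⁻¹ = E13 ^ a * E23 ^ b := by rw [KB]; group
  have conj' : X * E23⁻¹ * X⁻¹ = (E13 ^ a * E23 ^ b)⁻¹ := by
    rw [← conj]; group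
  have sB : E12 * (E13 ^ a * E23 ^ b) = (E13 ^ (a + b) * E23 ^ b) * E12 := by
    have := (s2.pow_right a).mul_right (s3.pow_right b)
    rwa [c1.mul_pow, ← mul_assoc, ← pow_add] at this
  have hC : E13 ^ (a + b) * E23 ^ b = E13 ^ b * (E13 ^ a * E23 ^ b) := by
    rw [add_comm, pow_add, mul_assoc]
  have sb : E12 * E13 ^ b = E13 ^ b * E12 := s2.pow_right b
  rw [hz]
  calc E12 ^ 2 * X * E23 * X⁻¹ * E12⁻¹ * X * E23⁻¹ * X⁻¹ * E12⁻¹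
      = E12 * (E12 * (X * E23 * X⁻¹)) * E12⁻¹ * (X * E23⁻¹ * X⁻¹) * E12⁻¹ := by
        rw [pow_two]; group
    _ = E12 * (E12 * (E13 ^ a * E23 ^ b)) * E12⁻¹ * (E13 ^ a * E23 ^ b)⁻¹ * E12⁻¹ := by
        rw [conj, conj']
    _ = E12 * (E13 ^ b * (E13 ^ a * E23 ^ b)) * (E13 ^ a * E23 ^ b)⁻¹ * E12⁻¹ := by
        rw [sB, hC]; group
    _ = E12 * E13 ^ b * E12⁻¹ := by group
    _ = E13 ^ b := by rw [sb]; group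
end

section
/- Let k ≥ 1 be an integer and let a, b ∈ ℤ/kℤ. Then there exists s ∈ ℤ/kℤ such that the ideal of ℤ/kℤ generated by a + s·b equals the ideal generated by a and b. -/
/-!
Lift `a` and `b` to integers `g x` and `g y` with `x`, `y` coprime. Then `(a, b) = (g)`, and it
suffices to find `s` with `x + s y` a unit mod `k`: since `x` is a unit mod `|y|`, it lifts to a
unit mod `k |y|`, whose integer representative has the form `x + s y`.
-/

theorem ZMod.exists_isUnit_intCast_add_mul (k : ℕ) [NeZero k] {x y : ℤ} (hxy : IsCoprime x y) :
    ∃ s : ℤ, IsUnit ((x + s * y : ℤ) : ZMod k) := by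
  rcases eq_or_ne y 0 with rfl | hy
  · exact ⟨0, by simpa using (isCoprime_zero_right.mp hxy).map (Int.castRingHom (ZMod k))⟩
  set n := y.natAbs
  have : NeZero (k * n) := ⟨mul_ne_zero (NeZero.ne k) (Int.natAbs_ne_zero.mpr hy)⟩
  have hx : IsUnit (x : ZMod n) := by
    have hy0 : (y : ZMod n) = 0 := (ZMod.intCast_zmod_eq_zero_iff_dvd y n).mpr Int.natAbs_dvd_self
    simpa [hy0, isCoprime_zero_right] using hxy.map (Int.castRingHom (ZMod n))
  obtain ⟨u, hu⟩ := ZMod.unitsMap_surjective (dvd_mul_left n k) hx.unit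
  have hux : (((u : ZMod (k * n)).val : ℤ) : ZMod n) = x := by
    simpa [ZMod.unitsMap_def, ZMod.natCast_val] using congrArg Units.val hu
  obtain ⟨s, hs⟩ : y ∣ (u : ZMod (k * n)).val - x :=
    Int.natAbs_dvd.mp ((ZMod.intCast_eq_intCast_iff_dvd_sub _ _ _).mp hux.symm)
  refine ⟨s, ?_⟩
  have hunit := (u.map (ZMod.castHom (dvd_mul_right k n) (ZMod k)).toMonoidHom).isUnit
  rw [show x + s * y = (u : ZMod (k * n)).val by linarith]
  simpa [ZMod.natCast_val] using hunit

theorem Ideal.span_pair_mul_right_of_isCoprime {R : Type*} [CommSemiring R] {x y : R}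
    (hxy : IsCoprime x y) (d : R) : Ideal.span {x * d, y * d} = Ideal.span {d} := by
  refine le_antisymm ?_ ?_
  · rw [Ideal.span_le, Set.insert_subset_iff, Set.singleton_subset_iff]
    exact ⟨Ideal.mul_mem_left _ _ (Ideal.mem_span_singleton_self d),
      Ideal.mul_mem_left _ _ (Ideal.mem_span_singleton_self d)⟩
  · obtain ⟨u, v, huv⟩ := hxy
    rw [Ideal.span_singleton_le_iff_mem, Ideal.mem_span_pair]
    exact ⟨u, v, by rw [← mul_assoc, ← mul_assoc, ← add_mul, huv, one_mul]⟩

/-- For a, b ∈ ℤ/kℤ there exists s ∈ ℤ/kℤ such that the ideal generated by a + s·b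
equals the ideal generated by a and b. -/
theorem exists_ideal_span_singleton_eq (k : ℕ) (hk : 1 ≤ k) (a b : ZMod k) :
    ∃ s : ZMod k, Ideal.span ({a + s * b} : Set (ZMod k)) =
      Ideal.span ({a, b} : Set (ZMod k)) := by
  have : NeZero k := ⟨Nat.one_le_iff_ne_zero.mp hk⟩
  obtain ⟨x, rfl⟩ := ZMod.intCast_surjective a
  obtain ⟨y, rfl⟩ := ZMod.intCast_surjective b
  rcases (Int.gcd x y).eq_zero_or_pos with hg | hg
  · obtain ⟨rfl, rfl⟩ := Int.gcd_eq_zero_iff.mp hg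
    exact ⟨0, by simp⟩
  obtain ⟨g, x, y, -, hgcd, rfl, rfl⟩ := Int.exists_gcd_one' hg
  have hxy : IsCoprime x y := Int.isCoprime_iff_gcd_eq_one.mpr hgcd
  obtain ⟨s, hs⟩ := ZMod.exists_isUnit_intCast_add_mul k hxy
  refine ⟨s, ?_⟩
  push_cast at hs ⊢
  rw [← show (x + s * y) * (g : ZMod k) = x * g + s * (y * g) by ring,
    Ideal.span_singleton_mul_left_unit hs]
  exact (Ideal.span_pair_mul_right_of_isCoprime (hxy.map (Int.castRingHom (ZMod k))) _).symm
end

section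
/- Let k ≥ 1 be an integer and let a_1, …, a_l ∈ ℤ/kℤ be elements such that the ideal they generate is the whole ring ℤ/kℤ. Then there exist t_2, …, t_l ∈ ℤ/kℤ such that a_1 + t_2·a_2 + t_3·a_3 + ⋯ + t_l·a_l is invertible in ℤ/kℤ. -/
/-!
`ℤ/kℤ` has finitely many maximal ideals, and over such a ring an element `x` coprime to `y`
can be moved into the units along `y`: by the Chinese remainder theorem choose `t ≡ 1` modulo
the maximal ideals containing `x` and `t ≡ 0` modulo the others; then `x + t * y` lies in no
maximal ideal.
Applied to `x = a 1` and the ideal generated by the remaining `a i`, this gives the theorem.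
-/

section Semilocal

variable {R : Type*} [CommRing R] [Finite (MaximalSpectrum R)]

theorem exists_isUnit_add_mul_of_isCoprime {x y : R} (h : IsCoprime x y) :
    ∃ t : R, IsUnit (x + t * y) := by
  classical
  obtain ⟨t, ht⟩ := Ideal.exists_forall_sub_mem_ideal
    (I := fun P : MaximalSpectrum R ↦ P.asIdeal)
    (fun P Q hPQ ↦ Ideal.isCoprime_of_isMaximal (MaximalSpectrum.ext_iff.ne.mp hPQ))
    (fun P ↦ if x ∈ P.asIdeal then 1 else 0)
  refine ⟨t, by_contra fun hunit ↦ ?_⟩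
  obtain ⟨P, hP, hmem⟩ := exists_max_ideal_of_mem_nonunits hunit
  have htP := ht ⟨P, hP⟩
  by_cases hx : x ∈ P
  · simp only [hx, if_true] at htP
    obtain ⟨u, v, huv⟩ := h
    have hy : y ∉ P := fun hy ↦ hP.ne_top <| P.eq_top_of_isUnit_mem
      (huv ▸ P.add_mem (P.mul_mem_left u hx) (P.mul_mem_left v hy)) isUnit_one
    have ht_notMem : t ∉ P := fun ht_notMem ↦ hP.ne_top <| P.eq_top_of_isUnit_mem
      (sub_sub_cancel t 1 ▸ P.sub_mem ht_notMem htP) isUnit_one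
    exact hP.isPrime.mul_notMem ht_notMem hy ((P.add_mem_iff_right hx).mp hmem)
  · simp only [hx, if_false, sub_zero] at htP
    exact hx ((P.add_mem_iff_left (P.mul_mem_right y htP)).mp hmem)

theorem exists_mem_isUnit_add_of_span_singleton_sup_eq_top {x : R} {I : Ideal R}
    (h : Ideal.span {x} ⊔ I = ⊤) : ∃ y ∈ I, IsUnit (x + y) := by
  obtain ⟨c, z, hz, hcz⟩ :=
    Ideal.mem_span_singleton_sup.mp (h ▸ Submodule.mem_top : (1 : R) ∈ _)
  have hxz : IsCoprime x z := ⟨c, 1, by rw [one_mul, hcz]⟩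
  obtain ⟨t, ht⟩ := exists_isUnit_add_mul_of_isCoprime hxz
  exact ⟨t * z, I.mul_mem_left t hz, ht⟩

end Semilocal

theorem exists_unit_combination_general (k l : ℕ) (hk : 1 ≤ k) (a : ℕ → ZMod k)
    (h : Ideal.span (a '' Set.Icc 1 l) = ⊤) :
    ∃ t : ℕ → ZMod k, IsUnit (a 1 + ∑ i ∈ Finset.Icc 2 l, t i * a i) := by
  have : NeZero k := ⟨by omega⟩
  have hsup : Ideal.span {a 1} ⊔ Ideal.span (a '' ↑(Finset.Icc 2 l)) = ⊤ := by
    rw [← Ideal.span_insert, eq_top_iff, ← h, Finset.coe_Icc, ← Set.image_insert_eq]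
    refine Ideal.span_mono <| Set.image_mono fun i hi ↦ ?_
    simp only [Set.mem_Icc, Set.mem_insert_iff] at hi ⊢
    omega
  obtain ⟨y, hy, hunit⟩ := exists_mem_isUnit_add_of_span_singleton_sup_eq_top hsup
  obtain ⟨t, rfl⟩ := (Submodule.mem_span_image_finset_iff_exists_fun' (ZMod k)).mp hy
  exact ⟨t, hunit⟩

/-- If a_1, …, a_l ∈ ℤ/kℤ generate the unit ideal, then there exist t_2, …, t_l ∈ ℤ/kℤ
such that a_1 + t_2·a_2 + ⋯ + t_l·a_l is invertible. -/
theorem exists_unit_combination (k l : ℕ) (hk : 1 ≤ k) (hl : 1 ≤ l) (a : ℕ → ZMod k)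
    (h : Ideal.span (a '' Set.Icc 1 l) = ⊤) :
    ∃ t : ℕ → ZMod k, IsUnit (a 1 + ∑ i ∈ Finset.Icc 2 l, t i * a i) :=
  exists_unit_combination_general k l hk a h
end
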